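/- Let s̄ ∈ (0, s_in), 0 < D_min < μ(s̄) < D_max, G2 > 0, and G1 > −μ'(s̄). Then the equilibrium (s̄, s_in − s̄, μ(s̄)) of the extended closed-loop system (chemostat with dynamic feedback) is locally exponentially stable: there exist δ > 0, C ≥ 1 and λ > 0 such that every solution t ↦ (s(t), b(t), D̄(t)) of the extended closed-loop system with initial condition within distance δ of (s̄, s_in − s̄, μ(s̄)) satisfies ‖(s(t), b(t), D̄(t)) − (s̄, s_in − s̄, μ(s̄))‖ ≤ C·e^{−λt}·‖(s(0), b(0), D̄(0)) − (s̄, s_in − s̄, μ(s̄))‖ for all t ≥ 0; in particular D̄(t) → μ(s̄) as t → ∞. -/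

import Mathlib

/-!
In the coordinates `x = s - s̄`, `w = D̄ - μ(s̄)`, `e = s + b - s_in` the closed loop reads
`e' = -u e` with `u ≥ D_min`, and, close to the equilibrium (where the feedback is unsaturated),
`x' ≈ β w - α x - μ(s) e`, `w' ≈ -γ x` with `β = s_in - s̄`, `α = β (G1 + μ'(s̄)) > 0` and
`γ = G2 (μ(s̄) - D_min) (D_max - μ(s̄)) > 0`, up to errors `o(|x| + |w|)`.
For a small `η > 0` and a large `M` the quadratic form `γ x² + β w² - 2η x w + M e²` is comparable
to the squared distance to the equilibrium and satisfies `V' ≤ -k V` near it: the cross term makes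
the `(x, w)` part strictly decreasing, and the damping of `e` absorbs the coupling `μ(s) e`.
A sublevel set of `V` inside that neighbourhood is invariant, and there `V` decays exponentially.
-/

/-- Saturation function `sat_{[Dmin,Dmax]}`. -/
noncomputable def sat (Dmin Dmax ξ : ℝ) : ℝ :=
  if ξ > Dmax then Dmax else if ξ < Dmin then Dmin else ξ

open Real Filter Topology Set

theorem le_sat {Dmin Dmax : ℝ} (h : Dmin ≤ Dmax) (ξ : ℝ) : Dmin ≤ sat Dmin Dmax ξ := by
  unfold sat; split_ifs <;> linarith

theorem sat_of_mem_Ioo {Dmin Dmax ξ : ℝ} (h : ξ ∈ Ioo Dmin Dmax) : sat Dmin Dmax ξ = ξ := by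
  unfold sat; split_ifs <;> linarith [h.1, h.2]

theorem two_mul_mul_le_of_sq_le_mul {p q r x w : ℝ} (hp : 0 < p) (h : r ^ 2 ≤ p * q) :
    2 * r * x * w ≤ p * x ^ 2 + q * w ^ 2 := by
  have : 0 ≤ p * (p * x ^ 2 + q * w ^ 2 - 2 * r * x * w) := by
    nlinarith [sq_nonneg (p * x - r * w), mul_nonneg (sub_nonneg.2 h) (sq_nonneg w)]
  nlinarith [(mul_nonneg_iff_of_pos_left hp).1 this]

section Lyapunov

variable {V V' : ℝ → ℝ} {k : ℝ}

theorem mul_exp_le_of_hasDerivAt_le_neg_mul {a b : ℝ} (hab : a ≤ b)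
    (hV : ∀ t ∈ Icc a b, HasDerivAt V (V' t) t) (hdec : ∀ t ∈ Ioo a b, V' t ≤ -k * V t) :
    V b * exp (k * b) ≤ V a * exp (k * a) := by
  have hderiv : ∀ t ∈ Icc a b, HasDerivAt (fun t => V t * exp (k * t))
      (exp (k * t) * (V' t + k * V t)) t := fun t ht => by
    have hexp : HasDerivAt (fun t => exp (k * t)) (exp (k * t) * k) t := by
      simpa using ((hasDerivAt_id t).const_mul k).exp
    exact ((hV t ht).mul hexp).congr_deriv (by ring)
  refine antitoneOn_of_hasDerivWithinAt_nonpos (f' := fun t => exp (k * t) * (V' t + k * V t))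
    (convex_Icc a b)
    (fun t ht => (hderiv t ht).continuousAt.continuousWithinAt) (fun t ht => ?_) (fun t ht => ?_)
    (left_mem_Icc.2 hab) (right_mem_Icc.2 hab) hab
  · rw [interior_Icc] at ht
    exact (hderiv t (Ioo_subset_Icc_self ht)).hasDerivWithinAt
  · rw [interior_Icc] at ht
    have := hdec t ht
    exact mul_nonpos_of_nonneg_of_nonpos (exp_pos _).le (by linarith)

/-- `V` cannot leave the sublevel set `{V < c}`: at the first time `t₀` it reaches `c`,
`V t₀ ≤ V t₀ e^{k t₀} ≤ V 0 < c` because `V e^{kt}` is non-increasing on `[0, t₀]`. -/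
theorem le_mul_exp_of_hasDerivAt_le_neg_mul {c : ℝ} (hk : 0 ≤ k) (hc : 0 ≤ c)
    (hV : ∀ t ≥ 0, HasDerivAt V (V' t) t) (hdec : ∀ t ≥ 0, V t < c → V' t ≤ -k * V t)
    (h0 : V 0 < c) {t : ℝ} (ht : 0 ≤ t) : V t ≤ V 0 * exp (-k * t) := by
  have hsub : ∀ t ≥ 0, V t < c := by
    by_contra! ⟨t₁, ht₁, hct₁⟩
    have hcont : ContinuousOn V (Icc 0 t₁) := fun t ht =>
      (hV t ht.1).continuousAt.continuousWithinAt
    obtain ⟨t₀, ⟨ht₀, hct₀⟩, hleast⟩ := (isCompact_Icc.of_isClosed_subset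
      (hcont.preimage_isClosed_of_isClosed isClosed_Icc isClosed_Ici)
      inter_subset_left).exists_isLeast ⟨t₁, ⟨ht₁, le_rfl⟩, hct₁⟩
    have hct₀ : c ≤ V t₀ := hct₀
    have hbefore : ∀ t ∈ Ioo 0 t₀, V t < c := fun t ht => by
      by_contra! hct
      exact (hleast ⟨⟨ht.1.le, ht.2.le.trans ht₀.2⟩, hct⟩).not_gt ht.2
    have hmono := mul_exp_le_of_hasDerivAt_le_neg_mul ht₀.1 (fun t ht => hV t ht.1)
      (fun t ht => hdec t ht.1.le (hbefore t ht))
    have hexp : V t₀ ≤ V t₀ * exp (k * t₀) :=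
      le_mul_of_one_le_right (hc.trans hct₀) (one_le_exp (mul_nonneg hk ht₀.1))
    simp only [mul_zero, exp_zero, mul_one] at hmono
    linarith
  have := mul_exp_le_of_hasDerivAt_le_neg_mul ht (fun t ht => hV t ht.1)
    (fun t ht => hdec t ht.1.le (hsub t ht.1.le))
  rw [mul_zero, exp_zero, mul_one] at this
  rw [neg_mul, exp_neg, ← div_eq_mul_inv, le_div_iff₀ (exp_pos _)]
  exact this

end Lyapunov

theorem norm_sub_le_of_lyapunov {E : Type*} [SeminormedAddCommGroup E] {x : ℝ → E} {x₀ : E}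
    {V : E → ℝ} {V' : ℝ → ℝ} {c₁ c₂ k ρ : ℝ} (hc₁ : 0 < c₁) (hk : 0 ≤ k) (hρ : 0 ≤ ρ)
    (hlow : ∀ p, c₁ * ‖p - x₀‖ ^ 2 ≤ V p) (hup : V (x 0) ≤ c₂ * ‖x 0 - x₀‖ ^ 2)
    (hV : ∀ t ≥ 0, HasDerivAt (fun t => V (x t)) (V' t) t)
    (hdec : ∀ t ≥ 0, ‖x t - x₀‖ < ρ → V' t ≤ -k * V (x t))
    (h0 : c₂ * ‖x 0 - x₀‖ ^ 2 < c₁ * ρ ^ 2) {t : ℝ} (ht : 0 ≤ t) :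
    ‖x t - x₀‖ ≤ √(c₂ / c₁) * exp (-(k / 2) * t) * ‖x 0 - x₀‖ := by
  have hsublevel : ∀ t ≥ 0, V (x t) < c₁ * ρ ^ 2 → V' t ≤ -k * V (x t) := by
    intro t ht hlt
    have hsq : ‖x t - x₀‖ ^ 2 < ρ ^ 2 := (mul_lt_mul_iff_right₀ hc₁).1 ((hlow (x t)).trans_lt hlt)
    exact hdec t ht (lt_of_pow_lt_pow_left₀ 2 hρ hsq)
  have hdecay := le_mul_exp_of_hasDerivAt_le_neg_mul (V := fun t => V (x t)) hk (by positivity) hV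
    hsublevel (hup.trans_lt h0) ht
  have hsq : ‖x t - x₀‖ ^ 2 ≤ c₂ / c₁ * (exp (-k * t) * ‖x 0 - x₀‖ ^ 2) := by
    rw [div_mul_eq_mul_div, le_div_iff₀ hc₁]
    nlinarith [hlow (x t), exp_pos (-k * t)]
  calc ‖x t - x₀‖ = √(‖x t - x₀‖ ^ 2) := (sqrt_sq (norm_nonneg _)).symm
    _ ≤ √(c₂ / c₁ * (exp (-k * t) * ‖x 0 - x₀‖ ^ 2)) := sqrt_le_sqrt hsq
    _ = √(c₂ / c₁) * exp (-(k / 2) * t) * ‖x 0 - x₀‖ := by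
      rw [sqrt_mul' _ (by positivity), sqrt_mul (exp_pos _).le, sqrt_sq (norm_nonneg _),
        ← exp_half]
      ring_nf

structure IsExpLyapunov {E : Type*} [NormedAddCommGroup E] [NormedSpace ℝ E] (f : E → E) (x₀ : E)
    (V V' : E → ℝ) (c₁ c₂ k ρ : ℝ) : Prop where
  lower : ∀ p, c₁ * ‖p - x₀‖ ^ 2 ≤ V p
  upper : ∀ p, V p ≤ c₂ * ‖p - x₀‖ ^ 2
  decay : ∀ p, ‖p - x₀‖ < ρ → V' p ≤ -k * V p
  hasDerivAt_comp : ∀ (x : ℝ → E) (t : ℝ), HasDerivAt x (f (x t)) t →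
    HasDerivAt (fun t => V (x t)) (V' (x t)) t

theorem IsExpLyapunov.exists_norm_sub_le_mul_exp {E : Type*} [NormedAddCommGroup E]
    [NormedSpace ℝ E] {f : E → E} {x₀ : E} {V V' : E → ℝ} {c₁ c₂ k ρ : ℝ}
    (hV : IsExpLyapunov f x₀ V V' c₁ c₂ k ρ)
    (hc₁ : 0 < c₁) (hc₂ : 0 < c₂) (hk : 0 < k) (hρ : 0 < ρ) :
    ∃ δ > 0, ∃ C ≥ 1, ∃ lam > 0, ∀ x : ℝ → E, (∀ t ≥ 0, HasDerivAt x (f (x t)) t) →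
      ‖x 0 - x₀‖ < δ → ∀ t ≥ 0, ‖x t - x₀‖ ≤ C * exp (-lam * t) * ‖x 0 - x₀‖ := by
  refine ⟨ρ * √(c₁ / c₂), by positivity, max 1 √(c₂ / c₁), le_max_left _ _, k / 2, by positivity,
    fun x hx h0 t ht => ?_⟩
  have hinit : c₂ * ‖x 0 - x₀‖ ^ 2 < c₁ * ρ ^ 2 := by
    have := pow_lt_pow_left₀ h0 (norm_nonneg _) two_ne_zero
    rw [mul_pow, sq_sqrt (by positivity), mul_div_assoc', lt_div_iff₀ hc₂] at this
    linarith
  calc ‖x t - x₀‖ ≤ √(c₂ / c₁) * exp (-(k / 2) * t) * ‖x 0 - x₀‖ :=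
        norm_sub_le_of_lyapunov hc₁ hk.le hρ.le hV.lower (hV.upper _)
          (fun t ht => hV.hasDerivAt_comp x t (hx t ht)) (fun t _ h => hV.decay _ h) hinit ht
    _ ≤ max 1 √(c₂ / c₁) * exp (-(k / 2) * t) * ‖x 0 - x₀‖ := by gcongr; exact le_max_right _ _

theorem tendsto_of_norm_sub_le_mul_exp {E : Type*} [SeminormedAddCommGroup E] {x : ℝ → E} {x₀ : E}
    {C lam N : ℝ} (hlam : 0 < lam) (h : ∀ t ≥ 0, ‖x t - x₀‖ ≤ C * exp (-lam * t) * N) :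
    Tendsto x atTop (𝓝 x₀) := by
  rw [tendsto_iff_norm_sub_tendsto_zero]
  refine squeeze_zero' (Eventually.of_forall fun t => norm_nonneg _)
    ((eventually_ge_atTop 0).mono h) ?_
  have hexp : Tendsto (fun t : ℝ => exp (-lam * t)) atTop (𝓝 0) := by
    simpa only [Function.comp_def, id, neg_mul] using
      tendsto_exp_neg_atTop_nhds_zero.comp (tendsto_id.const_mul_atTop hlam)
  simpa using (hexp.const_mul C).mul_const N

namespace Chemostat

def lyap (γ β η M x w e : ℝ) : ℝ := γ * x ^ 2 + β * w ^ 2 - 2 * η * (x * w) + M * e ^ 2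

def lyapDeriv (γ β η M x w e x' w' e' : ℝ) : ℝ :=
  2 * γ * x * x' + 2 * β * w * w' - 2 * η * (x' * w + x * w') + 2 * M * e * e'

section Weights

variable {γ β η M : ℝ}

theorem lyap_ge (hγ : 0 < γ) (hη : η ^ 2 ≤ γ * β / 4) (x w e : ℝ) :
    γ / 2 * x ^ 2 + β / 2 * w ^ 2 + M * e ^ 2 ≤ lyap γ β η M x w e := by
  have := two_mul_mul_le_of_sq_le_mul (x := x) (w := w) (r := η) (half_pos hγ) (q := β / 2)
    (by linarith)
  unfold lyap
  linarith

theorem lyap_le (hγ : 0 < γ) (hη : η ^ 2 ≤ γ * β / 4) (x w e : ℝ) :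
    lyap γ β η M x w e ≤ 3 * γ / 2 * x ^ 2 + 3 * β / 2 * w ^ 2 + M * e ^ 2 := by
  have := two_mul_mul_le_of_sq_le_mul (x := x) (w := -w) (r := η) (half_pos hγ) (q := β / 2)
    (by linarith)
  unfold lyap
  linarith

theorem hasDerivAt_lyap {x w e : ℝ → ℝ} {x' w' e' t : ℝ} (hx : HasDerivAt x x' t)
    (hw : HasDerivAt w w' t) (he : HasDerivAt e e' t) :
    HasDerivAt (fun t => lyap γ β η M (x t) (w t) (e t))
      (lyapDeriv γ β η M (x t) (w t) (e t) x' w' e') t := by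
  unfold lyap lyapDeriv
  refine ((((hx.pow 2).const_mul γ).add ((hw.pow 2).const_mul β)).sub
    ((hx.mul hw).const_mul (2 * η))).add ((he.pow 2).const_mul M) |>.congr_deriv ?_
  push_cast
  ring

end Weights

/-- The left-hand side is the derivative of `γ x² + β w² - 2η x w` along the linearisation
`x' = β w - α x`, `w' = -γ x` at the equilibrium. -/
theorem exists_linear_lyapunov {α β γ : ℝ} (hα : 0 < α) (hβ : 0 < β) (hγ : 0 < γ) :
    ∃ η > 0, ∃ lam > 0, η ^ 2 ≤ γ * β / 4 ∧ ∀ x w : ℝ,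
      -2 * γ * (α - η) * x ^ 2 + 2 * η * α * x * w - 2 * η * β * w ^ 2 ≤
        -lam * (x ^ 2 + w ^ 2) := by
  set η := min (α / 2) (γ * β / (2 * α))
  have hη : 0 < η := lt_min (by positivity) (by positivity)
  have hηα : η ≤ α / 2 := min_le_left _ _
  have hηγβ : 2 * α * η ≤ γ * β := by
    have := min_le_right (α / 2) (γ * β / (2 * α))
    rw [le_div_iff₀ (by positivity)] at this
    linarith
  refine ⟨η, hη, min (γ * α / 2) (η * β), lt_min (by positivity) (by positivity),
    by nlinarith, fun x w => ?_⟩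
  have hdisc : η * α ^ 2 ≤ γ * β * (α - η) := by
    nlinarith [mul_le_mul_of_nonneg_right hηγβ hα.le,
      mul_le_mul_of_nonneg_left hηα (mul_pos hγ hβ).le]
  have hcross := two_mul_mul_le_of_sq_le_mul (x := x) (w := w) (r := η * α)
    (p := γ * (α - η)) (q := η * β) (by nlinarith)
    (by nlinarith [mul_le_mul_of_nonneg_left hdisc hη.le])
  have h₁ := mul_le_mul_of_nonneg_right (min_le_left (γ * α / 2) (η * β)) (sq_nonneg x)
  have h₂ := mul_le_mul_of_nonneg_right (min_le_right (γ * α / 2) (η * β)) (sq_nonneg w)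
  nlinarith [mul_le_mul_of_nonneg_left hηα hγ.le, sq_nonneg x]

theorem lyapDeriv_le {γ β η M α lam ε K Dmin x w e x' w' k u : ℝ}
    (hγ : 0 < γ) (hβ : 0 < β) (hη : 0 < η) (hlam : 0 < lam) (hM : 0 ≤ M) (hε : 0 ≤ ε)
    (hlin : -2 * γ * (α - η) * x ^ 2 + 2 * η * α * x * w - 2 * η * β * w ^ 2 ≤
      -lam * (x ^ 2 + w ^ 2))
    (hrem : |x' - (β * w - α * x - k * e)| + |w' + γ * x| ≤ ε * (|x| + |w|))
    (hk : |k| ≤ K) (hu : Dmin ≤ u)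
    (hεlam : 8 * (γ + β + η) * ε ≤ lam / 4) (hMK : 8 * ((γ + β + η) * K) ^ 2 ≤ lam * M * Dmin) :
    lyapDeriv γ β η M x w e x' w' (-u * e) ≤ -(lam / 2) * (x ^ 2 + w ^ 2) - M * Dmin * e ^ 2 := by
  set A := 2 * (γ + β + η)
  set n := |x| + |w|
  set ρ₁ := x' - (β * w - α * x - k * e)
  set ρ₂ := w' + γ * x
  have hn : 0 ≤ n := by positivity
  have hn2 : n ^ 2 ≤ 2 * (x ^ 2 + w ^ 2) := by
    nlinarith [sq_nonneg (|x| - |w|), sq_abs x, sq_abs w]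
  have hX : |2 * γ * x - 2 * η * w| ≤ A * n := by
    refine (abs_sub _ _).trans ?_
    simp only [abs_mul, abs_two, abs_of_pos hγ, abs_of_pos hη]
    nlinarith [abs_nonneg x, abs_nonneg w]
  have hW : |2 * β * w - 2 * η * x| ≤ A * n := by
    refine (abs_sub _ _).trans ?_
    simp only [abs_mul, abs_two, abs_of_pos hβ, abs_of_pos hη]
    nlinarith [abs_nonneg x, abs_nonneg w]
  have hsmall : (2 * γ * x - 2 * η * w) * ρ₁ + (2 * β * w - 2 * η * x) * ρ₂ ≤
      lam / 4 * (x ^ 2 + w ^ 2) := by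
    have h₁ := (le_abs_self _).trans ((abs_mul _ _).trans_le
      (mul_le_mul hX le_rfl (abs_nonneg ρ₁) (by positivity)))
    have h₂ := (le_abs_self _).trans ((abs_mul _ _).trans_le
      (mul_le_mul hW le_rfl (abs_nonneg ρ₂) (by positivity)))
    have h₃ := mul_le_mul_of_nonneg_left hrem (by positivity : 0 ≤ A * n)
    nlinarith [mul_le_mul_of_nonneg_left hn2 (by positivity : 0 ≤ A * ε)]
  have hcoupling : -((2 * γ * x - 2 * η * w) * k * e) ≤
      lam / 4 * (x ^ 2 + w ^ 2) + M * Dmin * e ^ 2 := by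
    have h₁ : -((2 * γ * x - 2 * η * w) * k * e) ≤ A * n * (K * |e|) := by
      refine (neg_le_abs _).trans ?_
      rw [mul_assoc, abs_mul, abs_mul]
      exact mul_le_mul hX (mul_le_mul_of_nonneg_right hk (abs_nonneg e)) (by positivity)
        (by positivity)
    have hamgm : lam * (A * n * (K * |e|)) ≤ lam ^ 2 / 8 * n ^ 2 + 2 * (A * K) ^ 2 * e ^ 2 := by
      nlinarith [sq_nonneg (lam * n - 4 * A * K * |e|), sq_abs e]
    have hn2' := mul_le_mul_of_nonneg_left hn2 (by positivity : 0 ≤ lam ^ 2 / 8)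
    have hMK' : 2 * (A * K) ^ 2 * e ^ 2 ≤ lam * M * Dmin * e ^ 2 :=
      mul_le_mul_of_nonneg_right (by simp only [A]; linarith) (sq_nonneg e)
    have h₂ : lam * (A * n * (K * |e|)) ≤ lam * (lam / 4 * (x ^ 2 + w ^ 2) + M * Dmin * e ^ 2) := by
      linarith
    linarith [le_of_mul_le_mul_left h₂ hlam]
  have hdamp : -(2 * M * u * e ^ 2) ≤ -(2 * M * Dmin * e ^ 2) := by
    have := mul_le_mul_of_nonneg_right hu (mul_nonneg hM (sq_nonneg e))
    linarith
  have hexpand : lyapDeriv γ β η M x w e x' w' (-u * e) =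
      (-2 * γ * (α - η) * x ^ 2 + 2 * η * α * x * w - 2 * η * β * w ^ 2) +
      ((2 * γ * x - 2 * η * w) * ρ₁ + (2 * β * w - 2 * η * x) * ρ₂) -
      (2 * γ * x - 2 * η * w) * k * e - 2 * M * u * e ^ 2 := by
    simp only [lyapDeriv, ρ₁, ρ₂]; ring
  rw [hexpand]
  linarith only [hlin, hsmall, hcoupling, hdamp]

theorem le_neg_mul_lyap {γ β η M lam Dmin k x w e : ℝ} (hγ : 0 < γ) (hβ : 0 ≤ β)
    (hη : η ^ 2 ≤ γ * β / 4) (hM : 0 ≤ M) (hk : 0 ≤ k) (hklam : 3 * (γ + β) * k ≤ lam)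
    (hkD : k ≤ Dmin) :
    -(lam / 2) * (x ^ 2 + w ^ 2) - M * Dmin * e ^ 2 ≤ -k * lyap γ β η M x w e := by
  have hkγ : 3 * γ * k ≤ lam := by nlinarith
  have hkβ : 3 * β * k ≤ lam := by nlinarith
  nlinarith [mul_le_mul_of_nonneg_left (lyap_le (M := M) hγ hη x w e) hk,
    mul_le_mul_of_nonneg_right hkγ (sq_nonneg x), mul_le_mul_of_nonneg_right hkβ (sq_nonneg w),
    mul_le_mul_of_nonneg_right hkD (mul_nonneg hM (sq_nonneg e))]

section StateSpace

def lyapState (γ β η M : ℝ) (d : ℝ × ℝ × ℝ) : ℝ := lyap γ β η M d.1 d.2.2 (d.1 + d.2.1)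

def lyapStateDeriv (γ β η M : ℝ) (d v : ℝ × ℝ × ℝ) : ℝ :=
  lyapDeriv γ β η M d.1 d.2.2 (d.1 + d.2.1) v.1 v.2.2 (v.1 + v.2.1)

variable {γ β η M : ℝ}

theorem mul_norm_sq_le_lyapState (hγ : 0 < γ) (hβ : 0 ≤ β) (hM : 0 ≤ M)
    (hη : η ^ 2 ≤ γ * β / 4) (d : ℝ × ℝ × ℝ) :
    min (min (γ / 2) (β / 2)) M / 3 * ‖d‖ ^ 2 ≤ lyapState γ β η M d := by
  unfold lyapState
  set m := min (min (γ / 2) (β / 2)) M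
  have hm : 0 ≤ m := le_min (le_min (by positivity) (by positivity)) hM
  have hnorm : ‖d‖ ^ 2 ≤ 3 * (d.1 ^ 2 + d.2.2 ^ 2 + (d.1 + d.2.1) ^ 2) := by
    have hle : ‖d‖ ≤ √(d.1 ^ 2 + d.2.1 ^ 2 + d.2.2 ^ 2) := by
      refine norm_prod_le_iff.2 ⟨abs_le_sqrt (by nlinarith), norm_prod_le_iff.2
        ⟨abs_le_sqrt (by nlinarith), abs_le_sqrt (by nlinarith)⟩⟩
    have := pow_le_pow_left₀ (norm_nonneg d) hle 2
    rw [sq_sqrt (by positivity)] at this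
    nlinarith [sq_nonneg (2 * d.1 + d.2.1)]
  have hmin : m * (d.1 ^ 2 + d.2.2 ^ 2 + (d.1 + d.2.1) ^ 2) ≤
      γ / 2 * d.1 ^ 2 + β / 2 * d.2.2 ^ 2 + M * (d.1 + d.2.1) ^ 2 := by
    have h₁ : m ≤ γ / 2 := (min_le_left _ _).trans (min_le_left _ _)
    have h₂ : m ≤ β / 2 := (min_le_left _ _).trans (min_le_right _ _)
    have h₃ : m ≤ M := min_le_right _ _
    nlinarith [mul_le_mul_of_nonneg_right h₁ (sq_nonneg d.1),
      mul_le_mul_of_nonneg_right h₂ (sq_nonneg d.2.2),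
      mul_le_mul_of_nonneg_right h₃ (sq_nonneg (d.1 + d.2.1))]
  nlinarith [lyap_ge (M := M) hγ hη d.1 d.2.2 (d.1 + d.2.1), mul_le_mul_of_nonneg_left hnorm hm]

theorem lyapState_le_mul_norm_sq (hγ : 0 < γ) (hβ : 0 ≤ β) (hM : 0 ≤ M)
    (hη : η ^ 2 ≤ γ * β / 4) (d : ℝ × ℝ × ℝ) :
    lyapState γ β η M d ≤ (3 * γ / 2 + 3 * β / 2 + 4 * M) * ‖d‖ ^ 2 := by
  unfold lyapState
  have h₁ : |d.1| ≤ ‖d‖ := norm_fst_le d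
  have h₂ : |d.2.1| ≤ ‖d‖ := (norm_fst_le d.2).trans (norm_snd_le d)
  have h₃ : |d.2.2| ≤ ‖d‖ := (norm_snd_le d.2).trans (norm_snd_le d)
  have hx : d.1 ^ 2 ≤ ‖d‖ ^ 2 := sq_le_sq.2 (by rwa [abs_norm])
  have hw : d.2.2 ^ 2 ≤ ‖d‖ ^ 2 := sq_le_sq.2 (by rwa [abs_norm])
  have he : (d.1 + d.2.1) ^ 2 ≤ 4 * ‖d‖ ^ 2 := by
    have := sq_le_sq.2 (((abs_add_le _ _).trans (add_le_add h₁ h₂)).trans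
      (le_abs_self (‖d‖ + ‖d‖)))
    linarith
  nlinarith [lyap_le (M := M) hγ hη d.1 d.2.2 (d.1 + d.2.1), mul_le_mul_of_nonneg_left hx hγ.le,
    mul_le_mul_of_nonneg_left hw hβ, mul_le_mul_of_nonneg_left he hM]

theorem hasDerivAt_lyapState_sub {x : ℝ → ℝ × ℝ × ℝ} {v p₀ : ℝ × ℝ × ℝ} {t : ℝ}
    (hx : HasDerivAt x v t) :
    HasDerivAt (fun t => lyapState γ β η M (x t - p₀)) (lyapStateDeriv γ β η M (x t - p₀) v) t := by
  have hd := hx.sub_const p₀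
  have h₁ : HasDerivAt (fun t => (x t - p₀).1) v.1 t := by
    simpa using hd.hasFDerivAt.fst.hasDerivAt
  have h₂₁ : HasDerivAt (fun t => (x t - p₀).2.1) v.2.1 t := by
    simpa using hd.hasFDerivAt.snd.fst.hasDerivAt
  have h₂₂ : HasDerivAt (fun t => (x t - p₀).2.2) v.2.2 t := by
    simpa using hd.hasFDerivAt.snd.snd.hasDerivAt
  exact hasDerivAt_lyap h₁ h₂₂ (h₁.add h₂₁)

end StateSpace

theorem abs_remainder_le {a β G κ δ x w r : ℝ} (hδ : δ ≤ 1) (hx : |x| ≤ δ) (hw : |w| ≤ δ)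
    (hr : |r| ≤ δ * |x|) :
    |-(x * w) + a * x ^ 2 - (β - x) * r| + |-G * x * (κ * w - w ^ 2)| ≤
      (2 + |a| + |β| + |G| * (|κ| + 1)) * δ * |x| := by
  have hδ0 : 0 ≤ δ := (abs_nonneg x).trans hx
  have h₁ : |x * w| ≤ δ * |x| := by rw [abs_mul, mul_comm]; gcongr
  have h₂ : |a * x ^ 2| ≤ |a| * δ * |x| := by
    rw [abs_mul, abs_pow, sq, ← mul_assoc]; gcongr
  have h₃ : |(β - x) * r| ≤ (|β| + 1) * δ * |x| := by
    rw [abs_mul, mul_assoc]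
    exact mul_le_mul ((abs_sub _ _).trans (by linarith)) hr (abs_nonneg r) (by positivity)
  have h₄ : |κ * w - w ^ 2| ≤ (|κ| + 1) * δ := by
    refine (abs_sub _ _).trans ?_
    rw [abs_mul, abs_pow, sq]
    nlinarith [abs_nonneg κ, abs_nonneg w]
  have h₅ : |-G * x * (κ * w - w ^ 2)| ≤ |G| * (|κ| + 1) * δ * |x| := by
    rw [abs_mul, abs_mul, abs_neg, mul_comm |G| |x|, mul_assoc, mul_assoc, mul_assoc]
    have := mul_le_mul_of_nonneg_left h₄ (abs_nonneg G)
    nlinarith [abs_nonneg x, abs_nonneg G]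
  have h₆ := abs_add_le (-(x * w) + a * x ^ 2) (-((β - x) * r))
  have h₇ := abs_add_le (-(x * w)) (a * x ^ 2)
  rw [abs_neg] at h₆ h₇
  rw [sub_eq_add_neg]
  nlinarith [abs_nonneg x]

variable (μ : ℝ → ℝ) (s_in Dmin Dmax sbar G1 G2 : ℝ)

noncomputable def field (p : ℝ × ℝ × ℝ) : ℝ × ℝ × ℝ :=
  (-(μ p.1) * p.2.1 + sat Dmin Dmax (p.2.2 - G1 * (p.1 - sbar)) * (s_in - p.1),
    μ p.1 * p.2.1 - sat Dmin Dmax (p.2.2 - G1 * (p.1 - sbar)) * p.2.1,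
    -G2 * (p.1 - sbar) * (p.2.2 - Dmin) * (Dmax - p.2.2))

def equilibrium : ℝ × ℝ × ℝ := (sbar, s_in - sbar, μ sbar)

theorem field_fst_add_fst_snd (p : ℝ × ℝ × ℝ) :
    (field μ s_in Dmin Dmax sbar G1 G2 p).1 + (field μ s_in Dmin Dmax sbar G1 G2 p).2.1 =
      -sat Dmin Dmax (p.2.2 - G1 * (p.1 - sbar)) * (p.1 + p.2.1 - s_in) := by
  simp only [field]; ring

variable {μ s_in Dmin Dmax sbar} in
theorem eventually_field_approx (hμ : DifferentiableAt ℝ μ sbar) (hlow : Dmin < μ sbar)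
    (hup : μ sbar < Dmax) {ε : ℝ} (hε : 0 < ε) :
    ∀ᶠ p in 𝓝 (equilibrium μ s_in sbar),
      |(field μ s_in Dmin Dmax sbar G1 G2 p).1 - ((s_in - sbar) * (p.2.2 - μ sbar) -
          (s_in - sbar) * (G1 + deriv μ sbar) * (p.1 - sbar) - μ p.1 * (p.1 + p.2.1 - s_in))| +
        |(field μ s_in Dmin Dmax sbar G1 G2 p).2.2 +
          G2 * ((μ sbar - Dmin) * (Dmax - μ sbar)) * (p.1 - sbar)|
        ≤ ε * (|p.1 - sbar| + |p.2.2 - μ sbar|) := by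
  set C := 2 + |G1 + deriv μ sbar| + |s_in - sbar| + |G2| * (|Dmax + Dmin - 2 * μ sbar| + 1)
  have hC : 0 < C := by positivity
  set δ := min 1 (ε / C)
  have hδ : 0 < δ := lt_min one_pos (div_pos hε hC)
  have hfst : Tendsto (fun p : ℝ × ℝ × ℝ => p.1) (𝓝 (equilibrium μ s_in sbar)) (𝓝 sbar) :=
    continuous_fst.tendsto _
  have hsnd : Tendsto (fun p : ℝ × ℝ × ℝ => p.2.2) (𝓝 (equilibrium μ s_in sbar)) (𝓝 (μ sbar)) :=
    (continuous_snd.snd).tendsto _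
  have hfeedback : Tendsto (fun p : ℝ × ℝ × ℝ => p.2.2 - G1 * (p.1 - sbar))
      (𝓝 (equilibrium μ s_in sbar)) (𝓝 (μ sbar)) := by
    simpa using hsnd.sub ((hfst.sub_const sbar).const_mul G1)
  have htaylor := (hasDerivAt_iff_isLittleO.1 hμ.hasDerivAt).def hδ
  filter_upwards [hfst.eventually (eventually_abs_sub_lt sbar hδ),
    hsnd.eventually (eventually_abs_sub_lt (μ sbar) hδ), hfst.eventually htaylor,
    hfeedback.eventually (Ioo_mem_nhds hlow hup)] with p hx hw hr hsat
  simp only [Real.norm_eq_abs, smul_eq_mul] at hr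
  set x := p.1 - sbar
  set w := p.2.2 - μ sbar
  set r := μ p.1 - μ sbar - x * deriv μ sbar
  have hρ₁ : (field μ s_in Dmin Dmax sbar G1 G2 p).1 - ((s_in - sbar) * w -
      (s_in - sbar) * (G1 + deriv μ sbar) * x - μ p.1 * (p.1 + p.2.1 - s_in)) =
      -(x * w) + (G1 + deriv μ sbar) * x ^ 2 - (s_in - sbar - x) * r := by
    simp only [field, sat_of_mem_Ioo hsat, x, w, r]; ring
  have hρ₂ : (field μ s_in Dmin Dmax sbar G1 G2 p).2.2 +
      G2 * ((μ sbar - Dmin) * (Dmax - μ sbar)) * x =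
      -G2 * x * ((Dmax + Dmin - 2 * μ sbar) * w - w ^ 2) := by
    simp only [field, x, w]; ring
  have hCδ : C * δ ≤ ε := by
    have := min_le_right 1 (ε / C)
    rw [le_div_iff₀ hC] at this
    linarith
  rw [hρ₁, hρ₂]
  calc _ ≤ C * δ * |x| := abs_remainder_le (min_le_left _ _) hx.le hw.le hr
    _ ≤ ε * (|x| + |w|) := by nlinarith [abs_nonneg x, abs_nonneg w]


variable {μ s_in Dmin Dmax sbar G1 G2} in
theorem exists_isExpLyapunov (hμ : DifferentiableAt ℝ μ sbar) (hsbar : sbar < s_in)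
    (hDmin : 0 < Dmin) (hlow : Dmin < μ sbar) (hup : μ sbar < Dmax) (hG2 : 0 < G2)
    (hG1 : -deriv μ sbar < G1) :
    ∃ V V' : ℝ × ℝ × ℝ → ℝ, ∃ c₁ > 0, ∃ c₂ > 0, ∃ k > 0, ∃ ρ > 0,
      IsExpLyapunov (field μ s_in Dmin Dmax sbar G1 G2) (equilibrium μ s_in sbar)
        V V' c₁ c₂ k ρ := by
  set p₀ := equilibrium μ s_in sbar with hp₀
  set β := s_in - sbar
  set γ := G2 * ((μ sbar - Dmin) * (Dmax - μ sbar))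
  set α := β * (G1 + deriv μ sbar)
  have hβ : 0 < β := sub_pos.2 hsbar
  have hγ : 0 < γ := mul_pos hG2 (mul_pos (sub_pos.2 hlow) (sub_pos.2 hup))
  have hα : 0 < α := mul_pos hβ (by linarith)
  obtain ⟨η, hη, lam, hlam, hηsq, hlin⟩ := exists_linear_lyapunov hα hβ hγ
  set K := |μ sbar| + 1
  set M := 8 * ((γ + β + η) * K) ^ 2 / (lam * Dmin)
  have hM : 0 < M := by positivity
  set k := min (lam / (3 * (γ + β))) Dmin
  have hk : 0 < k := lt_min (by positivity) hDmin
  have hklam : 3 * (γ + β) * k ≤ lam := by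
    have := min_le_left (lam / (3 * (γ + β))) Dmin
    rwa [le_div_iff₀ (by positivity), mul_comm] at this
  have hbounded : ∀ᶠ p in 𝓝 p₀, |μ p.1| ≤ K :=
    ((continuous_fst.tendsto _).eventually (hμ.continuousAt.eventually
      (eventually_abs_sub_lt _ one_pos))).mono fun p hp => by
        linarith [abs_sub_abs_le_abs_sub (μ p.1) (μ sbar)]
  obtain ⟨ρ, hρ, hnear⟩ := Metric.eventually_nhds_iff.1 ((eventually_field_approx G1 G2 hμ hlow hup
    (ε := lam / (32 * (γ + β + η))) (by positivity)).and hbounded)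
  refine ⟨fun p => lyapState γ β η M (p - p₀),
    fun p => lyapStateDeriv γ β η M (p - p₀) (field μ s_in Dmin Dmax sbar G1 G2 p),
    _, by positivity, _, by positivity, k, hk, ρ, hρ,
    ⟨fun p => mul_norm_sq_le_lyapState hγ hβ.le hM.le hηsq _,
      fun p => lyapState_le_mul_norm_sq hγ hβ.le hM.le hηsq _, fun p hp => ?_,
      fun x t hx => hasDerivAt_lyapState_sub hx⟩⟩
  obtain ⟨happrox, hμK⟩ := hnear (by rwa [dist_eq_norm])
  have he : (p - p₀).1 + (p - p₀).2.1 = p.1 + p.2.1 - s_in := by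
    simp only [hp₀, equilibrium, Prod.fst_sub, Prod.snd_sub]; ring
  simp only [lyapState, lyapStateDeriv, he, field_fst_add_fst_snd]
  exact (lyapDeriv_le hγ hβ hη hlam hM.le (by positivity) (hlin _ _) happrox hμK
    (le_sat (hlow.trans hup).le _) (le_of_eq (by field_simp; ring))
    (le_of_eq (by simp only [M]; field_simp))).trans
    (le_neg_mul_lyap hγ hβ.le hηsq hM.le hk.le hklam (min_le_right _ _))

end Chemostat

theorem stmt_10_general
    (μ : ℝ → ℝ) (s_in Dmin Dmax sbar G1 G2 : ℝ)
    (hμ : ContDiff ℝ 1 μ)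
    (hsbar : sbar ∈ Set.Ioo 0 s_in)
    (hDmin : 0 < Dmin) (hlow : Dmin < μ sbar) (hup : μ sbar < Dmax)
    (hG2 : 0 < G2) (hG1 : -deriv μ sbar < G1) :
    ∃ δ > (0:ℝ), ∃ C ≥ (1:ℝ), ∃ lam > (0:ℝ),
      ∀ s b D : ℝ → ℝ,
        (∀ t ≥ (0:ℝ),
          HasDerivAt s
            (-(μ (s t)) * b t
              + sat Dmin Dmax (D t - G1 * (s t - sbar)) * (s_in - s t)) t ∧
          HasDerivAt b
            (μ (s t) * b t
              - sat Dmin Dmax (D t - G1 * (s t - sbar)) * b t) t ∧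
          HasDerivAt D
            (-G2 * (s t - sbar) * (D t - Dmin) * (Dmax - D t)) t) →
        ‖((s 0, b 0, D 0) : ℝ × ℝ × ℝ) - (sbar, s_in - sbar, μ sbar)‖ < δ →
        (∀ t ≥ (0:ℝ),
          ‖((s t, b t, D t) : ℝ × ℝ × ℝ) - (sbar, s_in - sbar, μ sbar)‖
            ≤ C * Real.exp (-lam * t) *
              ‖((s 0, b 0, D 0) : ℝ × ℝ × ℝ) - (sbar, s_in - sbar, μ sbar)‖) ∧
        Filter.Tendsto D Filter.atTop (nhds (μ sbar)) := by
  obtain ⟨V, V', c₁, hc₁, c₂, hc₂, k, hk, ρ, hρ, hV⟩ := Chemostat.exists_isExpLyapunov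
    (hμ.differentiable one_ne_zero sbar) hsbar.2 hDmin hlow hup hG2 hG1
  obtain ⟨δ, hδ, C, hC, lam, hlam, hstable⟩ := hV.exists_norm_sub_le_mul_exp hc₁ hc₂ hk hρ
  refine ⟨δ, hδ, C, hC, lam, hlam, fun s b D hsol h0 => ?_⟩
  have hbound := hstable (fun t => (s t, b t, D t))
    (fun t ht => (hsol t ht).1.prodMk ((hsol t ht).2.1.prodMk (hsol t ht).2.2)) h0
  exact ⟨hbound, (tendsto_of_norm_sub_le_mul_exp hlam hbound).snd_nhds.snd_nhds⟩

/-- Local exponential stability of the equilibrium `(s̄, s_in - s̄, μ(s̄))` of the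
extended closed-loop system (chemostat with dynamic feedback), Proposition 2. -/
theorem stmt_10
    (μ : ℝ → ℝ) (s_in Dmin Dmax sbar G1 G2 : ℝ)
    (hμ : ContDiff ℝ 1 μ) (hμ0 : μ 0 = 0)
    (hμpos : ∀ x ∈ Set.Ioc 0 s_in, 0 < μ x) (hsin : 0 < s_in)
    (hsbar : sbar ∈ Set.Ioo 0 s_in)
    (hDmin : 0 < Dmin) (hlow : Dmin < μ sbar) (hup : μ sbar < Dmax)
    (hG2 : 0 < G2) (hG1 : -deriv μ sbar < G1) :
    ∃ δ > (0:ℝ), ∃ C ≥ (1:ℝ), ∃ lam > (0:ℝ),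
      ∀ s b D : ℝ → ℝ,
        (∀ t ≥ (0:ℝ),
          HasDerivAt s
            (-(μ (s t)) * b t
              + sat Dmin Dmax (D t - G1 * (s t - sbar)) * (s_in - s t)) t ∧
          HasDerivAt b
            (μ (s t) * b t
              - sat Dmin Dmax (D t - G1 * (s t - sbar)) * b t) t ∧
          HasDerivAt D
            (-G2 * (s t - sbar) * (D t - Dmin) * (Dmax - D t)) t) →
        ‖((s 0, b 0, D 0) : ℝ × ℝ × ℝ) - (sbar, s_in - sbar, μ sbar)‖ < δ →
        (∀ t ≥ (0:ℝ),
          ‖((s t, b t, D t) : ℝ × ℝ × ℝ) - (sbar, s_in - sbar, μ sbar)‖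
            ≤ C * Real.exp (-lam * t) *
              ‖((s 0, b 0, D 0) : ℝ × ℝ × ℝ) - (sbar, s_in - sbar, μ sbar)‖) ∧
        Filter.Tendsto D Filter.atTop (nhds (μ sbar)) :=
  stmt_10_general μ s_in Dmin Dmax sbar G1 G2 hμ hsbar hDmin hlow hup hG2 hG1
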